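/- Let v(k), 0 ≤ k ≤ N, be as defined via the weights W, and define the one-spike update: from configuration x ∈ ℝ_+^N, the spike of neuron k produces (Δ_k(x))_j = x_j + W_{k→j} for j ≠ k, (Δ_k(x))_k = 0. Then Δ_k(v(k−1)) = v(k) for every k = 1, ..., N. -/
import Mathlib


/-- The one-spike update maps v(k−1) to v(k): Δ_k(v(k−1)) = v(k). -/
theorem stmt13 (N : ℕ) (hN : 1 ≤ N) (W : Fin N → Fin N → ℝ)
    (hW : ∀ i j, 0 ≤ W i j) (hWdiag : ∀ i, W i i = 0)
    (v : ℕ → Fin N → ℝ)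
    (h0 : ∀ i : Fin N,
      v 0 i = ∑ j ∈ Finset.univ.filter (fun j : Fin N => i.val < j.val), W j i)
    (hk : ∀ k : ℕ, 1 ≤ k → k ≤ N → ∀ i : Fin N,
      (i.val + 1 = k → v k i = 0) ∧
      (k ≤ i.val → v k i =
        v 0 i + ∑ j ∈ Finset.univ.filter (fun j : Fin N => j.val < k), W j i) ∧
      (i.val + 1 < k → v k i =
        ∑ j ∈ Finset.univ.filter (fun j : Fin N => i.val < j.val ∧ j.val < k), W j i)) :
    ∀ k : Fin N, ∀ j : Fin N,
      v (k.val + 1) j = if j = k then 0 else v k.val j + W k j := by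
  intro k j
  obtain ⟨hA, hB, hC⟩ := hk (k.val + 1) (Nat.le_add_left 1 k.val) k.isLt j
  by_cases hjk : j = k
  · subst hjk; simp [hA rfl]
  · simp only [if_neg hjk]
    rcases lt_or_ge j.val k.val with hlt | hge
    · have h1 : j.val + 1 < k.val + 1 := by omega
      rw [hC h1]
      have hins : Finset.univ.filter (fun j' : Fin N => j.val < j'.val ∧ j'.val < k.val + 1)
          = insert k (Finset.univ.filter (fun j' : Fin N => j.val < j'.val ∧ j'.val < k.val)) := by
        ext x; simp [Fin.ext_iff]; omega
      rw [hins, Finset.sum_insert (by simp)]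
      rcases Nat.lt_or_ge (j.val + 1) k.val with h2 | h2
      · obtain ⟨_, _, hC'⟩ := hk k.val (by omega) (by omega) j
        rw [hC' h2, add_comm]
      · have heq : j.val + 1 = k.val := by omega
        obtain ⟨hA', _, _⟩ := hk k.val (by omega) (by omega) j
        rw [hA' heq]
        have hemp : Finset.univ.filter (fun j' : Fin N => j.val < j'.val ∧ j'.val < k.val) = ∅ := by
          ext x; simp; omega
        rw [hemp]; simp
    · have hlt : k.val < j.val := lt_of_le_of_ne hge (fun h => hjk (Fin.ext h.symm))
      rw [hB (by omega)]
      have hins : Finset.univ.filter (fun j' : Fin N => j'.val < k.val + 1)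
          = insert k (Finset.univ.filter (fun j' : Fin N => j'.val < k.val)) := by
        ext x; simp [Fin.ext_iff]; omega
      rw [hins, Finset.sum_insert (by simp)]
      have hv : v k.val j = v 0 j + ∑ j' ∈ Finset.univ.filter (fun j' : Fin N => j'.val < k.val), W j' j := by
        rcases Nat.eq_zero_or_pos k.val with h0k | h0k
        · rw [h0k]
          have hemp : Finset.univ.filter (fun j' : Fin N => j'.val < 0) = ∅ := by
            ext x; simp
          rw [hemp]; simp
        · obtain ⟨_, hB', _⟩ := hk k.val h0k (le_of_lt k.isLt) j
          exact hB' hge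
      rw [hv]; ring
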